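/- Block scaling permutation: for any x ∈ (ℝ\{0})^{MN}, the maps A ↦ diag(x)·A and A ↦ A·diag(x) are bijections of the block set 𝒞^{N,M} onto itself. -/

import Mathlib

open Matrix Finset

/-- `A` is an L-CoLT matrix with ratio vector `r` (0-indexed; `r` has `N-1` meaningful
nonzero entries): `A (i+1) j = r i * A i j` for `j ≤ i`, and `A i j = 0` for `i < j`. -/
def IsLCoLT {N : ℕ} (A : Matrix (Fin N) (Fin N) ℝ) (r : ℕ → ℝ) : Prop :=
  (∀ k, k + 1 < N → r k ≠ 0) ∧
  (∀ i i' j : Fin N, (i' : ℕ) = (i : ℕ) + 1 → (j : ℕ) ≤ (i : ℕ) → A i' j = r i * A i j) ∧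
  (∀ i j : Fin N, (i : ℕ) < (j : ℕ) → A i j = 0)

/-- `A` is a U-CoLT matrix with ratio vector `r'` (0-indexed; `r'` has `N-2` meaningful
nonzero entries): `A (i-1) j = r' (i-1) * A i j` for `i < j`, and `A i j = 0` for `j ≤ i`. -/
def IsUCoLT {N : ℕ} (A : Matrix (Fin N) (Fin N) ℝ) (r' : ℕ → ℝ) : Prop :=
  (∀ k, k + 2 < N → r' k ≠ 0) ∧
  (∀ i i' j : Fin N, (i : ℕ) = (i' : ℕ) + 1 → (i : ℕ) < (j : ℕ) → A i' j = r' i' * A i j) ∧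
  (∀ i j : Fin N, (j : ℕ) ≤ (i : ℕ) → A i j = 0)

/-- The set 𝒞^N: sums of an L-CoLT and a U-CoLT matrix. -/
def InCN {N : ℕ} (M : Matrix (Fin N) (Fin N) ℝ) : Prop :=
  ∃ A B : Matrix (Fin N) (Fin N) ℝ,
    (∃ r, IsLCoLT A r) ∧ (∃ r', IsUCoLT B r') ∧ M = A + B

/-- The block set 𝒞^{N,M}: an MN×MN block matrix (indexed by Fin M × Fin N, first
component the block index) whose diagonal blocks lie in 𝒞^N and whose blocks satisfy
A_{i+1,j} = diag(r^L_i) A_{i,j} for j ≤ i and A_{i-1,j} = diag(r^U_{i-1}) A_{i,j} for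
i ≤ j, with the block ratio vectors r^L, r^U ∈ (ℝ\{0})^{(M-1)N}. -/
def IsBlockCoLT {N M : ℕ} (A : Matrix (Fin M × Fin N) (Fin M × Fin N) ℝ)
    (rL rU : ℕ → Fin N → ℝ) : Prop :=
  (∀ k : Fin M, InCN ((fun a b => A (k, a) (k, b)) : Matrix (Fin N) (Fin N) ℝ)) ∧
  (∀ k, k + 1 < M → ∀ a, rL k a ≠ 0) ∧
  (∀ k, k + 1 < M → ∀ a, rU k a ≠ 0) ∧
  (∀ i i' j : Fin M, (i' : ℕ) = (i : ℕ) + 1 → (j : ℕ) ≤ (i : ℕ) → ∀ a b : Fin N,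
    A (i', a) (j, b) = rL (i : ℕ) a * A (i, a) (j, b)) ∧
  (∀ i i' j : Fin M, (i : ℕ) = (i' : ℕ) + 1 → (i : ℕ) ≤ (j : ℕ) → ∀ a b : Fin N,
    A (i', a) (j, b) = rU (i' : ℕ) a * A (i, a) (j, b))

/-! Multiplying row `i` by `e i ≠ 0` turns every row ratio `A (i+1) j / A i j` into
`r i * e (i+1) / e i` and creates or destroys no zeros, while multiplying columns leaves the
row ratios untouched. Since the inverse of `diag(x)` is again a nonzero diagonal matrix, both
maps send 𝒞^{N,M} into itself together with their inverses. -/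

theorem Set.bijOn_mul_left_of_mul_eq_one {α : Type*} [Monoid α] {S : Set α} {a b : α}
    (hba : b * a = 1) (hab : a * b = 1) (ha : S.MapsTo (a * ·) S) (hb : S.MapsTo (b * ·) S) :
    S.BijOn (a * ·) S :=
  Set.InvOn.bijOn ⟨fun c _ => by simp only [← mul_assoc, hba, one_mul],
    fun c _ => by simp only [← mul_assoc, hab, one_mul]⟩ ha hb

theorem Set.bijOn_mul_right_of_mul_eq_one {α : Type*} [Monoid α] {S : Set α} {a b : α}
    (hab : a * b = 1) (hba : b * a = 1) (ha : S.MapsTo (· * a) S) (hb : S.MapsTo (· * b) S) :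
    S.BijOn (· * a) S :=
  Set.InvOn.bijOn ⟨fun c _ => by simp only [mul_assoc, hab, mul_one],
    fun c _ => by simp only [mul_assoc, hba, mul_one]⟩ ha hb

section Scaling

variable {N M : ℕ}

theorem IsLCoLT.diagonal_mul {A : Matrix (Fin N) (Fin N) ℝ} {r : ℕ → ℝ} (h : IsLCoLT A r)
    {e : ℕ → ℝ} (he : ∀ k, e k ≠ 0) :
    IsLCoLT (diagonal (fun i : Fin N => e i) * A) (fun k => r k * e (k + 1) / e k) := by
  obtain ⟨hr, hstep, hzero⟩ := h
  refine ⟨fun k hk => by have := hr k hk; have := he k; have := he (k + 1); positivity,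
    fun i i' j hi' hj => ?_, fun i j hij => ?_⟩
  · have := he i
    simp only [Matrix.diagonal_mul, hstep i i' j hi' hj, hi']
    field_simp
  · simp only [Matrix.diagonal_mul, hzero i j hij, mul_zero]

theorem IsUCoLT.diagonal_mul {A : Matrix (Fin N) (Fin N) ℝ} {r : ℕ → ℝ} (h : IsUCoLT A r)
    {e : ℕ → ℝ} (he : ∀ k, e k ≠ 0) :
    IsUCoLT (diagonal (fun i : Fin N => e i) * A) (fun k => r k * e k / e (k + 1)) := by
  obtain ⟨hr, hstep, hzero⟩ := h
  refine ⟨fun k hk => by have := hr k hk; have := he k; have := he (k + 1); positivity,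
    fun i i' j hi hij => ?_, fun i j hij => ?_⟩
  · have := he i
    simp only [Matrix.diagonal_mul, hstep i i' j hi hij, ← hi]
    field_simp
  · simp only [Matrix.diagonal_mul, hzero i j hij, mul_zero]

theorem InCN.diagonal_mul {A : Matrix (Fin N) (Fin N) ℝ} (h : InCN A) {e : ℕ → ℝ}
    (he : ∀ k, e k ≠ 0) : InCN (diagonal (fun i : Fin N => e i) * A) := by
  obtain ⟨L, U, ⟨r, hL⟩, ⟨r', hU⟩, rfl⟩ := h
  exact ⟨_, _, ⟨_, hL.diagonal_mul he⟩, ⟨_, hU.diagonal_mul he⟩, Matrix.mul_add _ _ _⟩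

theorem IsLCoLT.mul_diagonal {A : Matrix (Fin N) (Fin N) ℝ} {r : ℕ → ℝ} (h : IsLCoLT A r)
    (d : Fin N → ℝ) : IsLCoLT (A * diagonal d) r := by
  obtain ⟨hr, hstep, hzero⟩ := h
  refine ⟨hr, fun i i' j hi' hj => ?_, fun i j hij => ?_⟩
  · rw [Matrix.mul_diagonal, Matrix.mul_diagonal, hstep i i' j hi' hj, mul_assoc]
  · rw [Matrix.mul_diagonal, hzero i j hij, zero_mul]

theorem IsUCoLT.mul_diagonal {A : Matrix (Fin N) (Fin N) ℝ} {r : ℕ → ℝ} (h : IsUCoLT A r)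
    (d : Fin N → ℝ) : IsUCoLT (A * diagonal d) r := by
  obtain ⟨hr, hstep, hzero⟩ := h
  refine ⟨hr, fun i i' j hi hij => ?_, fun i j hij => ?_⟩
  · rw [Matrix.mul_diagonal, Matrix.mul_diagonal, hstep i i' j hi hij, mul_assoc]
  · rw [Matrix.mul_diagonal, hzero i j hij, zero_mul]

theorem InCN.mul_diagonal {A : Matrix (Fin N) (Fin N) ℝ} (h : InCN A) (d : Fin N → ℝ) :
    InCN (A * diagonal d) := by
  obtain ⟨L, U, ⟨r, hL⟩, ⟨r', hU⟩, rfl⟩ := h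
  exact ⟨_, _, ⟨_, hL.mul_diagonal d⟩, ⟨_, hU.mul_diagonal d⟩, Matrix.add_mul _ _ _⟩

theorem IsBlockCoLT.diagonal_mul {A : Matrix (Fin M × Fin N) (Fin M × Fin N) ℝ}
    {rL rU : ℕ → Fin N → ℝ} (h : IsBlockCoLT A rL rU) {e : ℕ → ℕ → ℝ}
    (he : ∀ k a, e k a ≠ 0) :
    IsBlockCoLT (diagonal (fun p => e p.1 p.2) * A)
      (fun k a => rL k a * e (k + 1) a / e k a) (fun k a => rU k a * e k a / e (k + 1) a) := by
  obtain ⟨hdiag, hrL, hrU, hL, hU⟩ := h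
  refine ⟨fun k => ?_, fun k hk a => ?_, fun k hk a => ?_,
    fun i i' j hi' hj a b => ?_, fun i i' j hi hij a b => ?_⟩
  · change InCN ((diagonal (fun p : Fin M × Fin N => e p.1 p.2) * A).submatrix
      (Prod.mk k) (Prod.mk k))
    have hblock : (diagonal (fun p : Fin M × Fin N => e p.1 p.2) * A).submatrix
        (Prod.mk k) (Prod.mk k) =
        diagonal (fun a : Fin N => e k a) * A.submatrix (Prod.mk k) (Prod.mk k) := by
      ext a b
      simp only [submatrix_apply, Matrix.diagonal_mul]
    exact hblock ▸ (hdiag k).diagonal_mul (he k)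
  · have := hrL k hk a; have := he k a; have := he (k + 1) a; positivity
  · have := hrU k hk a; have := he k a; have := he (k + 1) a; positivity
  · have := he i a
    simp only [Matrix.diagonal_mul, hL i i' j hi' hj a b, hi']
    field_simp
  · have := he i a
    simp only [Matrix.diagonal_mul, hU i i' j hi hij a b, ← hi]
    field_simp

theorem IsBlockCoLT.mul_diagonal {A : Matrix (Fin M × Fin N) (Fin M × Fin N) ℝ}
    {rL rU : ℕ → Fin N → ℝ} (h : IsBlockCoLT A rL rU) (x : Fin M × Fin N → ℝ) :
    IsBlockCoLT (A * diagonal x) rL rU := by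
  obtain ⟨hdiag, hrL, hrU, hL, hU⟩ := h
  refine ⟨fun k => ?_, hrL, hrU, fun i i' j hi' hj a b => ?_, fun i i' j hi hij a b => ?_⟩
  · change InCN ((A * diagonal x).submatrix (Prod.mk k) (Prod.mk k))
    have hblock : (A * diagonal x).submatrix (Prod.mk k) (Prod.mk k) =
        A.submatrix (Prod.mk k) (Prod.mk k) * diagonal (fun b => x (k, b)) := by
      ext a b
      simp only [submatrix_apply, Matrix.mul_diagonal]
    exact hblock ▸ (hdiag k).mul_diagonal _
  · simp only [Matrix.mul_diagonal, hL i i' j hi' hj a b, mul_assoc]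
  · simp only [Matrix.mul_diagonal, hU i i' j hi hij a b, mul_assoc]

/-- The ratio vectors are indexed by `ℕ`, so the scaling factors are extended from
`Fin M × Fin N` to `ℕ × ℕ` by `1`. -/
theorem exists_isBlockCoLT_diagonal_mul {A : Matrix (Fin M × Fin N) (Fin M × Fin N) ℝ}
    {rL rU : ℕ → Fin N → ℝ} (h : IsBlockCoLT A rL rU) {x : Fin M × Fin N → ℝ}
    (hx : ∀ p, x p ≠ 0) : ∃ rL' rU', IsBlockCoLT (diagonal x * A) rL' rU' := by
  have hinj : Function.Injective (Prod.map Fin.val Fin.val : Fin M × Fin N → ℕ × ℕ) :=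
    Fin.val_injective.prodMap Fin.val_injective
  set e : ℕ → ℕ → ℝ := fun k a => Function.extend (Prod.map Fin.val Fin.val) x 1 (k, a)
  have he : ∀ k a, e k a ≠ 0 := by
    intro k a
    simp only [e, Function.extend_def]
    split_ifs
    exacts [hx _, one_ne_zero]
  have hxe : x = fun p => e p.1 p.2 := funext fun p => (hinj.extend_apply x 1 p).symm
  exact ⟨_, _, hxe ▸ h.diagonal_mul he⟩

end Scaling

theorem stmt15 {N M : ℕ} (x : Fin M × Fin N → ℝ) (hx : ∀ i, x i ≠ 0) :
    Set.BijOn (fun A => Matrix.diagonal x * A)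
      {A : Matrix (Fin M × Fin N) (Fin M × Fin N) ℝ | ∃ rL rU, IsBlockCoLT A rL rU}
      {A : Matrix (Fin M × Fin N) (Fin M × Fin N) ℝ | ∃ rL rU, IsBlockCoLT A rL rU} ∧
    Set.BijOn (fun A => A * Matrix.diagonal x)
      {A : Matrix (Fin M × Fin N) (Fin M × Fin N) ℝ | ∃ rL rU, IsBlockCoLT A rL rU}
      {A : Matrix (Fin M × Fin N) (Fin M × Fin N) ℝ | ∃ rL rU, IsBlockCoLT A rL rU} := by
  have hx' : ∀ i, x⁻¹ i ≠ 0 := fun i => inv_ne_zero (hx i)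
  have hinv : diagonal x⁻¹ * diagonal x = 1 := by
    rw [diagonal_mul_diagonal, ← diagonal_one]
    exact congrArg diagonal (funext fun i => inv_mul_cancel₀ (hx i))
  have hinv' : diagonal x * diagonal x⁻¹ = 1 := by
    rw [diagonal_mul_diagonal, ← diagonal_one]
    exact congrArg diagonal (funext fun i => mul_inv_cancel₀ (hx i))
  refine ⟨Set.bijOn_mul_left_of_mul_eq_one hinv hinv' ?_ ?_,
    Set.bijOn_mul_right_of_mul_eq_one hinv' hinv ?_ ?_⟩
  · rintro A ⟨rL, rU, hA⟩; exact exists_isBlockCoLT_diagonal_mul hA hx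
  · rintro A ⟨rL, rU, hA⟩; exact exists_isBlockCoLT_diagonal_mul hA hx'
  · rintro A ⟨rL, rU, hA⟩; exact ⟨rL, rU, hA.mul_diagonal x⟩
  · rintro A ⟨rL, rU, hA⟩; exact ⟨rL, rU, hA.mul_diagonal x⁻¹⟩
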